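/- Let π : E → B be a Serre fibration and let C = C_*(E;k) with the Serre filtration F^p = ⊕_q T^{p,q}, where T^{p,q} ⊆ C_{p+q} is generated by singular simplices that are q-degenerate with respect to π. Then the Alexander–Whitney comultiplication Δ : C → C⊗C satisfies Δ(F^p) ⊆ G^p = Σ_{a+b=p} F^a ⊗ F^b, i.e., Δ is a morphism of filtered complexes. -/

import Mathlib

open TensorProduct

noncomputable section

/-- The type of singular simplices of a topological space `X` (of all dimensions). -/
abbrev SSimp (X : Type) [TopologicalSpace X] : Type :=
  Σ n : ℕ, C(↥(SimplexCategory.toTop.obj (SimplexCategory.mk n)), X)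

/-- The (total) singular chains of `X` with coefficients in `k`: the free `k`-module
on the singular simplices of `X`. -/
abbrev Chains (k : Type) [Field k] (X : Type) [TopologicalSpace X] : Type :=
  SSimp X →₀ k

/-- The front face inclusion `[0,...,j] : Δ^j → Δ^n` in the simplex category. -/
def frontHom (j n : ℕ) (h : j ≤ n) : SimplexCategory.mk j ⟶ SimplexCategory.mk n :=
  SimplexCategory.mkHom
    ⟨fun i => ⟨i.1, by have := i.isLt; omega⟩, fun a b hab => by
      have h2 : (a : ℕ) ≤ b := hab
      simpa [Fin.mk_le_mk] using h2⟩

/-- The back face inclusion `[j,...,n] : Δ^{n-j} → Δ^n` in the simplex category. -/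
def backHom (j n : ℕ) (h : j ≤ n) : SimplexCategory.mk (n - j) ⟶ SimplexCategory.mk n :=
  SimplexCategory.mkHom
    ⟨fun i => ⟨i.1 + j, by have := i.isLt; omega⟩, fun a b hab => by
      have h2 : (a : ℕ) ≤ b := hab
      simpa [Fin.mk_le_mk] using h2⟩

/-- The Alexander–Whitney diagonal `Δ : C_*(X) → C_*(X) ⊗ C_*(X)`, defined on a singular
`n`-simplex `α` by `Δ(α) = Σ_{j=0}^{n} (α ∘ [0,...,j]) ⊗ (α ∘ [j,...,n])`. -/
def AW (k : Type) [Field k] (X : Type) [TopologicalSpace X] :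
    Chains k X →ₗ[k] Chains k X ⊗[k] Chains k X :=
  Finsupp.lift (Chains k X ⊗[k] Chains k X) k (SSimp X) (fun s =>
    ∑ j : Fin (s.1 + 1),
      (Finsupp.single
        (⟨j.1, s.2.comp (SimplexCategory.toTop.map (frontHom j.1 s.1 j.is_le)).hom⟩ : SSimp X)
        (1 : k))
      ⊗ₜ[k]
      (Finsupp.single
        (⟨s.1 - j.1, s.2.comp (SimplexCategory.toTop.map (backHom j.1 s.1 j.is_le)).hom⟩ : SSimp X)
        (1 : k)))


section Serre

variable (k : Type) [Field k]
variable (E B : Type) [TopologicalSpace E] [TopologicalSpace B] (f : C(E, B))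

/-- A singular simplex `α : Δ^n → E` lies in Serre filtration level `p` with respect to
`π : E → B` if `π ∘ α = α' ∘ s` for some codegeneracy (surjective monotone map)
`s : Δ^n → Δ^m` with `m ≤ p` and some singular simplex `α'` of `B`.  (For `m = n - i`
this says exactly that `α` is `i`-degenerate with respect to `π`.) -/
def SerreSet (p : ℕ) : Set (Chains k E) :=
  {z | ∃ (n : ℕ) (α : C(↥(SimplexCategory.toTop.obj (SimplexCategory.mk n)), E)),
    z = Finsupp.single (⟨n, α⟩ : SSimp E) (1 : k) ∧
    ∃ m : ℕ, m ≤ p ∧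
      ∃ s : SimplexCategory.mk n ⟶ SimplexCategory.mk m,
        Function.Surjective ⇑s.toOrderHom ∧
        ∃ α' : C(↥(SimplexCategory.toTop.obj (SimplexCategory.mk m)), B),
          ∀ x, f (α x) = α' (SimplexCategory.toTop.map s x)}

/-- The Serre filtration `F^p = ⊕_q T^{p,q}` of the singular chains of the total space
of a fibration, `T^{p,q}` being generated by the `(p+q)`-simplices that are
`q`-degenerate with respect to `π`. -/
def SerreFilt (p : ℕ) : Submodule k (Chains k E) :=
  Submodule.span k (SerreSet k E B f p)

/-!
If `π ∘ α = α' ∘ s` with `s : [n] ↠ [m]` and `m ≤ p`, then for `a = s j` the map `s`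
sends `[0,…,j]` onto `[0,…,a]` and `[j,…,n]` onto `[a,…,m]`, by surjectivity and
monotonicity. Hence the Alexander–Whitney term `α∘[0,…,j] ⊗ α∘[j,…,n]` is a tensor of a
simplex in `F^a` with one in `F^(m-a) ⊆ F^(p-a)`.
-/

open CategoryTheory

namespace SimplexCategory

variable {n m : ℕ} (s : mk n ⟶ mk m)

theorem exists_surjective_frontHom_comp (hs : Function.Surjective s.toOrderHom)
    (j : Fin (n + 1)) :
    ∃ t : mk j.1 ⟶ mk (s.toOrderHom j).1, Function.Surjective t.toOrderHom ∧
      frontHom j n j.is_le ≫ s = t ≫ frontHom _ m (s.toOrderHom j).is_le := by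
  have hle (i : Fin (j.1 + 1)) : s.toOrderHom (Fin.castLE j.isLt i) ≤ s.toOrderHom j :=
    s.toOrderHom.monotone (Fin.le_iff_val_le_val.2 (Nat.lt_succ_iff.1 i.isLt))
  refine ⟨mkHom ⟨fun i => ⟨s.toOrderHom (Fin.castLE j.isLt i), Nat.lt_succ_of_le (hle i)⟩,
    fun u v huv => s.toOrderHom.monotone ((Fin.castLE_le_castLE_iff _).2 huv)⟩, ?_, ?_⟩
  · rintro ⟨v, hv⟩
    obtain ⟨i, hi⟩ := hs ⟨v, by have := (s.toOrderHom j).isLt; simp at hv this ⊢; omega⟩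
    refine ⟨⟨min i j, Nat.lt_succ_of_le (min_le_right i j)⟩, Fin.ext ?_⟩
    change (s.toOrderHom (min i j) : ℕ) = v
    rw [s.toOrderHom.monotone.map_min, hi, Fin.coe_min]
    exact min_eq_left (Nat.lt_succ_iff.1 hv)
  · ext i
    rfl

theorem exists_surjective_backHom_comp (hs : Function.Surjective s.toOrderHom)
    (j : Fin (n + 1)) :
    ∃ t : mk (n - j.1) ⟶ mk (m - (s.toOrderHom j).1), Function.Surjective t.toOrderHom ∧
      backHom j n j.is_le ≫ s = t ≫ backHom _ m (s.toOrderHom j).is_le := by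
  let shift (i : Fin (n - j.1 + 1)) : Fin (n + 1) := ⟨i + j, by omega⟩
  have hge (i : Fin (n - j.1 + 1)) : s.toOrderHom j ≤ s.toOrderHom (shift i) :=
    s.toOrderHom.monotone (Fin.le_iff_val_le_val.2 (Nat.le_add_left _ _))
  have hle (x : Fin (n + 1)) : (s.toOrderHom x : ℕ) ≤ m :=
    Nat.lt_succ_iff.1 (s.toOrderHom x).isLt
  refine ⟨mkHom ⟨fun i => ⟨s.toOrderHom (shift i) - s.toOrderHom j,
    Nat.lt_succ_of_le (Nat.sub_le_sub_right (hle _) _)⟩,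
    fun u v huv => ?_⟩, ?_, ?_⟩
  · exact Nat.sub_le_sub_right (s.toOrderHom.monotone (Nat.add_le_add_right huv _)) _
  · rintro ⟨v, hv⟩
    obtain ⟨i, hi⟩ := hs ⟨v + s.toOrderHom j, by simp at hv ⊢; omega⟩
    refine ⟨⟨max i j - j, Nat.lt_succ_of_le
      (Nat.sub_le_sub_right (Nat.lt_succ_iff.1 (max i j).isLt) _)⟩, Fin.ext ?_⟩
    change (s.toOrderHom (shift _) : ℕ) - s.toOrderHom j = v
    rw [show shift _ = max i j from Fin.ext (Nat.sub_add_cancel (le_max_right i j)),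
      s.toOrderHom.monotone.map_max, hi, Fin.coe_max]
    simp
  · ext i
    exact (Nat.sub_add_cancel (hge i)).symm

end SimplexCategory

theorem AW_single {X : Type} [TopologicalSpace X] (n : ℕ)
    (α : C(↥(SimplexCategory.toTop.obj (SimplexCategory.mk n)), X)) :
    AW k X (Finsupp.single ⟨n, α⟩ 1) =
      ∑ j : Fin (n + 1),
        Finsupp.single (⟨j.1, α.comp (SimplexCategory.toTop.map (frontHom j n j.is_le)).hom⟩ :
          SSimp X) (1 : k) ⊗ₜ[k]
        Finsupp.single (⟨n - j.1, α.comp (SimplexCategory.toTop.map (backHom j n j.is_le)).hom⟩ :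
          SSimp X) (1 : k) := by
  rw [AW, Finsupp.lift_apply, Finsupp.sum_single_index (by simp), one_smul]

theorem single_comp_mem_serreSet {n m l c p : ℕ}
    {α : C(↥(SimplexCategory.toTop.obj (SimplexCategory.mk n)), E)}
    {s : SimplexCategory.mk n ⟶ SimplexCategory.mk m}
    {α' : C(↥(SimplexCategory.toTop.obj (SimplexCategory.mk m)), B)}
    (hα : ∀ x, f (α x) = α' (SimplexCategory.toTop.map s x))
    {ι : SimplexCategory.mk l ⟶ SimplexCategory.mk n}
    {t : SimplexCategory.mk l ⟶ SimplexCategory.mk c} (ht : Function.Surjective t.toOrderHom)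
    {κ : SimplexCategory.mk c ⟶ SimplexCategory.mk m} (hst : ι ≫ s = t ≫ κ) (hcp : c ≤ p) :
    Finsupp.single (⟨l, α.comp (SimplexCategory.toTop.map ι).hom⟩ : SSimp E) (1 : k) ∈
      SerreSet k E B f p := by
  refine ⟨l, _, rfl, c, hcp, t, ht, α'.comp (SimplexCategory.toTop.map κ).hom, fun x => ?_⟩
  have := congrArg (fun g => SimplexCategory.toTop.map g x) hst
  simp only [Functor.map_comp] at this
  simp only [ContinuousMap.comp_apply, hα]
  exact congrArg α' this

theorem statement15 :
    ∀ p : ℕ,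
      Submodule.map (AW k E) (SerreFilt k E B f p) ≤
        ⨆ (a : ℕ) (_ : a ≤ p),
          LinearMap.range (TensorProduct.map
            (SerreFilt k E B f a).subtype (SerreFilt k E B f (p - a)).subtype) := by
  intro p
  rw [Submodule.map_le_iff_le_comap, SerreFilt, Submodule.span_le]
  rintro _ ⟨n, α, rfl, m, hmp, s, hs, α', hα⟩
  rw [SetLike.mem_coe, Submodule.mem_comap, AW_single]
  refine Submodule.sum_mem _ fun j _ => ?_
  have hjm : (s.toOrderHom j : ℕ) ≤ m := Nat.lt_succ_iff.1 (s.toOrderHom j).isLt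
  obtain ⟨t, ht, hfront⟩ := SimplexCategory.exists_surjective_frontHom_comp s hs j
  obtain ⟨t', ht', hback⟩ := SimplexCategory.exists_surjective_backHom_comp s hs j
  have hx := single_comp_mem_serreSet k E B f hα ht hfront le_rfl
  have hy := single_comp_mem_serreSet k E B f hα ht' hback (Nat.sub_le_sub_right hmp _)
  exact Submodule.mem_iSup_of_mem _ <| Submodule.mem_iSup_of_mem (hjm.trans hmp)
    ⟨⟨_, Submodule.subset_span hx⟩ ⊗ₜ ⟨_, Submodule.subset_span hy⟩, rfl⟩

end Serre

end
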